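/- For every (η_1,…,η_{m−1}) ∈ V′ (with η_m := 1 − η_1 − ⋯ − η_{m−1}) there is a unique Δ(η) ∈ (θ, ∞) satisfying ∑_{i=1}^m η_i · log(∑_{j=1}^∞ γ_{ij}^{Δ(η)}) = 0, and the function Δ : V′ → ℝ is real analytic on V′. -/

import Mathlib

/-!
Write `Zᵢ(t) = ∑ⱼ γᵢⱼ ^ t`. For `t > θ` the series extends holomorphically to `Re z > θ`, so
`log Zᵢ` is real analytic there, and its derivative `(∑ⱼ γᵢⱼ ^ t log γᵢⱼ) / Zᵢ(t)` is negative.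
Hence the pressure `P(η, t) = ∑ᵢ ηᵢ log Zᵢ(t)` is strictly decreasing in `t`; it tends to `+∞` as
`t ↓ θ` because the row `i₀` diverges at `θ`, and to `-∞` as `t → ∞` by dominated convergence, so
it has exactly one zero `Δ(η)`. As `P` is jointly analytic with `∂ₜ P < 0`, the analytic implicit
function theorem makes `Δ` analytic.
-/

open Real Filter Topology

open scoped ContDiff

section RpowSeries

variable {γ : ℕ → ℝ} {θ s t : ℝ}

theorem summable_rpow_of_le (hγ0 : ∀ j, 0 < γ j) (hγ1 : ∀ j, γ j ≤ 1)
    (hs : Summable fun j => γ j ^ s) (hst : s ≤ t) : Summable fun j => γ j ^ t :=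
  hs.of_nonneg_of_le (fun j => (rpow_pos_of_pos (hγ0 j) t).le)
    fun j => rpow_le_rpow_of_exponent_ge (hγ0 j) (hγ1 j) hst

theorem summable_rpow_of_sInf_lt (hγ0 : ∀ j, 0 < γ j) (hγ1 : ∀ j, γ j ≤ 1)
    (hsum : Summable γ) (ht : sInf {s : ℝ | 0 < s ∧ Summable fun j => γ j ^ s} < t) :
    Summable fun j => γ j ^ t := by
  have hne : {s : ℝ | 0 < s ∧ Summable fun j => γ j ^ s}.Nonempty :=
    ⟨1, one_pos, by simpa using hsum⟩
  obtain ⟨s, ⟨-, hs⟩, hst⟩ := exists_lt_of_csInf_lt hne ht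
  exact summable_rpow_of_le hγ0 hγ1 hs hst.le

theorem tsum_rpow_pos (hγ0 : ∀ j, 0 < γ j) (hs : Summable fun j => γ j ^ t) :
    0 < ∑' j, γ j ^ t :=
  hs.tsum_pos (fun j => (rpow_pos_of_pos (hγ0 j) t).le) 0 (rpow_pos_of_pos (hγ0 0) t)

theorem analyticAt_tsum_rpow (hγ0 : ∀ j, 0 < γ j) (hγ1 : ∀ j, γ j ≤ 1)
    (hs : Summable fun j => γ j ^ s) (hst : s < t) :
    AnalyticAt ℝ (fun x => ∑' j, γ j ^ x) t := by
  let F : ℂ → ℂ := fun z => ∑' j, (γ j : ℂ) ^ z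
  have hU : IsOpen {z : ℂ | s < z.re} := isOpen_lt continuous_const Complex.continuous_re
  have hF : DifferentiableOn ℂ F {z : ℂ | s < z.re} := by
    refine Complex.differentiableOn_tsum_of_summable_norm hs
      (fun j => (differentiable_id.const_cpow (Or.inl (mod_cast (hγ0 j).ne'))).differentiableOn)
      hU fun j z hz => ?_
    rw [Complex.norm_cpow_eq_rpow_re_of_pos (hγ0 j)]
    exact rpow_le_rpow_of_exponent_ge (hγ0 j) (hγ1 j) (le_of_lt hz)
  refine (hF.analyticAt (hU.mem_nhds (by simpa using hst))).re_ofReal.congr ?_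
  filter_upwards [Ioi_mem_nhds hst] with x hx
  simp only [F, ← Complex.ofReal_cpow (hγ0 _).le, ← Complex.ofReal_tsum, Complex.ofReal_re]

theorem abs_rpow_mul_log_le {x : ℝ} (hx0 : 0 < x) (hx1 : x ≤ 1) (hst : s < t) :
    |x ^ t * log x| ≤ x ^ s / (t - s) := by
  have hsplit : x ^ t * log x = x ^ s * (log x * x ^ (t - s)) := by
    conv_lhs => rw [← add_sub_cancel s t, rpow_add hx0]
    ring
  rw [hsplit, abs_mul, abs_of_pos (rpow_pos_of_pos hx0 s), div_eq_mul_one_div]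
  gcongr
  exact (abs_log_mul_self_rpow_lt x _ hx0 hx1 (sub_pos.2 hst)).le

theorem hasDerivAt_tsum_rpow (hγ0 : ∀ j, 0 < γ j) (hγ1 : ∀ j, γ j ≤ 1)
    (hs : Summable fun j => γ j ^ s) (hst : s < t) :
    HasDerivAt (fun x => ∑' j, γ j ^ x) (∑' j, γ j ^ t * log (γ j)) t := by
  obtain ⟨b, hsb, hbt⟩ := exists_between hst
  refine hasDerivAt_tsum_of_isPreconnected (hs.div_const (b - s)) isOpen_Ioi isPreconnected_Ioi
    (fun j y _ => (hasStrictDerivAt_const_rpow (hγ0 j) y).hasDerivAt) (fun j y hy => ?_) hbt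
    (summable_rpow_of_le hγ0 hγ1 hs hst.le) hbt
  calc ‖γ j ^ y * log (γ j)‖ ≤ γ j ^ s / (y - s) :=
        abs_rpow_mul_log_le (hγ0 j) (hγ1 j) (hsb.trans hy)
    _ ≤ γ j ^ s / (b - s) :=
        div_le_div_of_nonneg_left (rpow_pos_of_pos (hγ0 j) s).le (sub_pos.2 hsb)
          (sub_le_sub_right (le_of_lt hy) s)

theorem tsum_rpow_mul_log_neg (hγ0 : ∀ j, 0 < γ j) (hγ1 : ∀ j, γ j < 1)
    (hs : Summable fun j => γ j ^ s) (hst : s < t) : ∑' j, γ j ^ t * log (γ j) < 0 := by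
  have hsum : Summable fun j => γ j ^ t * log (γ j) :=
    (hs.div_const (t - s)).of_norm_bounded fun j =>
      abs_rpow_mul_log_le (hγ0 j) (hγ1 j).le hst
  have hterm : ∀ j, γ j ^ t * log (γ j) < 0 := fun j =>
    mul_neg_of_pos_of_neg (rpow_pos_of_pos (hγ0 j) t) (log_neg (hγ0 j) (hγ1 j))
  simpa [tsum_neg] using hsum.neg.tsum_pos (fun j => (neg_pos.2 (hterm j)).le) 0
    (neg_pos.2 (hterm 0))

theorem exists_hasDerivAt_log_tsum_rpow_neg (hγ0 : ∀ j, 0 < γ j) (hγ1 : ∀ j, γ j < 1)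
    (hs : Summable fun j => γ j ^ s) (hst : s < t) :
    ∃ d < 0, HasDerivAt (fun x => log (∑' j, γ j ^ x)) d t := by
  have hpos := tsum_rpow_pos hγ0 (summable_rpow_of_le hγ0 (fun j => (hγ1 j).le) hs hst.le)
  exact ⟨_, div_neg_of_neg_of_pos (tsum_rpow_mul_log_neg hγ0 hγ1 hs hst) hpos,
    (hasDerivAt_tsum_rpow hγ0 (fun j => (hγ1 j).le) hs hst).log hpos.ne'⟩

theorem tendsto_log_tsum_rpow_atTop_atBot (hγ0 : ∀ j, 0 < γ j) (hγ1 : ∀ j, γ j < 1)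
    (hsum : Summable γ) : Tendsto (fun t : ℝ => log (∑' j, γ j ^ t)) atTop atBot := by
  have hsum' : Summable fun j => γ j ^ (1 : ℝ) := by simpa using hsum
  have hzero : Tendsto (fun t : ℝ => ∑' j, γ j ^ t) atTop (𝓝 0) := by
    simpa using tendsto_tsum_of_dominated_convergence hsum
      (fun j => tendsto_rpow_atTop_of_base_lt_one _ (by linarith [hγ0 j]) (hγ1 j))
      (eventually_ge_atTop 1 |>.mono fun t ht j => by
        rw [norm_of_nonneg (rpow_pos_of_pos (hγ0 j) t).le]
        simpa using rpow_le_rpow_of_exponent_ge (hγ0 j) (hγ1 j).le ht)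
  refine tendsto_log_nhdsGT_zero.comp (tendsto_nhdsWithin_iff.2 ⟨hzero, ?_⟩)
  filter_upwards [eventually_ge_atTop (1 : ℝ)] with t ht
  exact tsum_rpow_pos hγ0 (summable_rpow_of_le hγ0 (fun j => (hγ1 j).le) hsum' ht)

theorem tendsto_log_tsum_rpow_nhdsGT_atTop (hγ0 : ∀ j, 0 < γ j)
    (hsum : ∀ t, θ < t → Summable fun j => γ j ^ t) (hdiv : ¬Summable fun j => γ j ^ θ) :
    Tendsto (fun t => log (∑' j, γ j ^ t)) (𝓝[>] θ) atTop := by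
  refine tendsto_log_atTop.comp (tendsto_atTop.2 fun R => ?_)
  obtain ⟨N, hN⟩ := ((not_summable_iff_tendsto_nat_atTop_of_nonneg
    fun j => (rpow_pos_of_pos (hγ0 j) θ).le).1 hdiv |>.eventually_gt_atTop R).exists
  have hcont : ContinuousAt (fun t => ∑ j ∈ Finset.range N, γ j ^ t) θ := by
    fun_prop (disch := exact (hγ0 _).ne')
  filter_upwards [nhdsWithin_le_nhds (hcont.eventually (lt_mem_nhds hN)),
    self_mem_nhdsWithin] with t hRt ht
  exact hRt.le.trans ((hsum t ht).sum_le_tsum _ fun j _ => (rpow_pos_of_pos (hγ0 j) t).le)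

end RpowSeries

theorem strictAntiOn_Ioi_of_hasDerivAt_neg {f : ℝ → ℝ} {θ : ℝ}
    (hf : ∀ t, θ < t → ∃ d < 0, HasDerivAt f d t) : StrictAntiOn f (Set.Ioi θ) := by
  refine strictAntiOn_of_deriv_neg (convex_Ioi θ)
    (fun t ht => (hf t ht).choose_spec.2.continuousAt.continuousWithinAt) fun t ht => ?_
  rw [interior_Ioi] at ht
  obtain ⟨d, hd, hfd⟩ := hf t ht
  rwa [hfd.deriv]

section Pressure

variable {ι : Type*} [Fintype ι] {γ : ι → ℕ → ℝ} {w : ι → ℝ} {θ t : ℝ}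

noncomputable def pressure (γ : ι → ℕ → ℝ) (w : ι → ℝ) (t : ℝ) : ℝ :=
  ∑ i, w i * log (∑' j, γ i j ^ t)

theorem analyticAt_pressure {E : Type*} [NormedAddCommGroup E] [NormedSpace ℝ E]
    {w : E → ι → ℝ} {a : E} (hγ0 : ∀ i j, 0 < γ i j) (hγ1 : ∀ i j, γ i j ≤ 1)
    (hsum : ∀ i t, θ < t → Summable fun j => γ i j ^ t)
    (hw : ∀ i, AnalyticAt ℝ (fun x => w x i) a) (ht : θ < t) :
    AnalyticAt ℝ (fun x : E × ℝ => pressure γ (w x.1) x.2) (a, t) := by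
  obtain ⟨s, hθs, hst⟩ := exists_between ht
  refine Finset.analyticAt_fun_sum _ fun i _ => ?_
  have hlog : AnalyticAt ℝ (fun x : E × ℝ => log (∑' j, γ i j ^ x.2)) (a, t) :=
    ((analyticAt_tsum_rpow (hγ0 i) (hγ1 i) (hsum i s hθs) hst).log
      (tsum_rpow_pos (hγ0 i) (hsum i t ht))).comp (x := (a, t)) analyticAt_snd
  have hwi : AnalyticAt ℝ (fun x : E × ℝ => w x.1 i) (a, t) :=
    (hw i).comp (x := (a, t)) analyticAt_fst
  exact hwi.mul hlog

theorem exists_hasDerivAt_pressure_neg {k : ι} (hγ0 : ∀ i j, 0 < γ i j)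
    (hγ1 : ∀ i j, γ i j < 1) (hsum : ∀ i t, θ < t → Summable fun j => γ i j ^ t)
    (hw : ∀ i, 0 ≤ w i) (hk : 0 < w k) (ht : θ < t) :
    ∃ d < 0, HasDerivAt (pressure γ w) d t := by
  obtain ⟨s, hθs, hst⟩ := exists_between ht
  choose d hd hL using fun i => exists_hasDerivAt_log_tsum_rpow_neg (hγ0 i) (hγ1 i)
    (hsum i s hθs) hst
  refine ⟨∑ i, w i * d i, Finset.sum_neg' (fun i _ => mul_nonpos_of_nonneg_of_nonpos (hw i)
    (hd i).le) ⟨k, Finset.mem_univ k, mul_neg_of_pos_of_neg hk (hd k)⟩, ?_⟩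
  exact HasDerivAt.fun_sum fun i _ => (hL i).const_mul (w i)

theorem strictAntiOn_pressure {k : ι} (hγ0 : ∀ i j, 0 < γ i j) (hγ1 : ∀ i j, γ i j < 1)
    (hsum : ∀ i t, θ < t → Summable fun j => γ i j ^ t) (hw : ∀ i, 0 ≤ w i) (hk : 0 < w k) :
    StrictAntiOn (pressure γ w) (Set.Ioi θ) :=
  strictAntiOn_Ioi_of_hasDerivAt_neg fun _ ht =>
    exists_hasDerivAt_pressure_neg hγ0 hγ1 hsum hw hk ht

theorem tendsto_pressure_atTop_atBot {k : ι} (hγ0 : ∀ i j, 0 < γ i j) (hγ1 : ∀ i j, γ i j < 1)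
    (hsum : ∀ i, Summable (γ i)) (hw : ∀ i, 0 ≤ w i) (hk : 0 < w k) :
    Tendsto (pressure γ w) atTop atBot := by
  classical
  have hL i := tendsto_log_tsum_rpow_atTop_atBot (hγ0 i) (hγ1 i) (hsum i)
  have hrest : ∀ᶠ t : ℝ in atTop, ∑ i ∈ Finset.univ.erase k, w i * log (∑' j, γ i j ^ t) ≤ 0 := by
    filter_upwards [eventually_all.2 fun i => (hL i).eventually_le_atBot 0] with t ht
    exact Finset.sum_nonpos fun i _ => mul_nonpos_of_nonneg_of_nonpos (hw i) (ht i)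
  have := tendsto_atBot_add_left_of_ge' _ 0 hrest ((hL k).const_mul_atBot hk)
  simp only [Finset.sum_erase_add _ _ (Finset.mem_univ k)] at this
  exact this

theorem tendsto_pressure_nhdsGT_atTop {k : ι} (hγ0 : ∀ i j, 0 < γ i j) (hγ1 : ∀ i j, γ i j < 1)
    (hsum : ∀ i t, θ < t → Summable fun j => γ i j ^ t) (hdiv : ¬Summable fun j => γ k j ^ θ)
    (hw : ∀ i, 0 ≤ w i) (hk : 0 < w k) :
    Tendsto (pressure γ w) (𝓝[>] θ) atTop := by
  classical
  have hanti i : StrictAntiOn (fun t => log (∑' j, γ i j ^ t)) (Set.Ioi θ) :=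
    strictAntiOn_Ioi_of_hasDerivAt_neg fun t ht => by
      obtain ⟨s, hθs, hst⟩ := exists_between ht
      exact exists_hasDerivAt_log_tsum_rpow_neg (hγ0 i) (hγ1 i) (hsum i s hθs) hst
  have hrest : ∀ᶠ t in 𝓝[>] θ, ∑ i ∈ Finset.univ.erase k, w i * log (∑' j, γ i j ^ (θ + 1))
      ≤ ∑ i ∈ Finset.univ.erase k, w i * log (∑' j, γ i j ^ t) := by
    filter_upwards [Ioc_mem_nhdsGT (lt_add_one θ)] with t ht
    refine Finset.sum_le_sum fun i _ => mul_le_mul_of_nonneg_left ?_ (hw i)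
    exact (hanti i).antitoneOn ht.1 (lt_add_one θ) ht.2
  have := tendsto_atTop_add_left_of_le' _ _ hrest
    ((tendsto_log_tsum_rpow_nhdsGT_atTop (hγ0 k) (hsum k) hdiv).const_mul_atTop hk)
  simp only [Finset.sum_erase_add _ _ (Finset.mem_univ k)] at this
  exact this

theorem existsUnique_pressure_eq_zero {k : ι} (hγ0 : ∀ i j, 0 < γ i j)
    (hγ1 : ∀ i j, γ i j < 1) (hsumγ : ∀ i, Summable (γ i))
    (hsum : ∀ i t, θ < t → Summable fun j => γ i j ^ t) (hdiv : ¬Summable fun j => γ k j ^ θ)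
    (hw : ∀ i, 0 ≤ w i) (hk : 0 < w k) :
    ∃! t, θ < t ∧ pressure γ w t = 0 := by
  have hderiv t (ht : θ < t) := exists_hasDerivAt_pressure_neg hγ0 hγ1 hsum hw hk ht
  have hnearθ := tendsto_pressure_nhdsGT_atTop hγ0 hγ1 hsum hdiv hw hk
  have hnearInf := tendsto_pressure_atTop_atBot hγ0 hγ1 hsumγ hw hk
  obtain ⟨t₁, hpos, ht₁⟩ := (hnearθ.eventually_gt_atTop 0 |>.and self_mem_nhdsWithin).exists
  obtain ⟨T, hneg, hT⟩ := (hnearInf.eventually_lt_atBot 0 |>.and (eventually_ge_atTop t₁)).exists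
  have hcont : ContinuousOn (pressure γ w) (Set.Icc t₁ T) := fun t ht =>
    (hderiv t (lt_of_lt_of_le ht₁ ht.1)).choose_spec.2.continuousAt.continuousWithinAt
  obtain ⟨t, htI, hzero⟩ := intermediate_value_Ioo' hT hcont ⟨hneg, hpos⟩
  have hθt : θ < t := lt_trans ht₁ htI.1
  exact ⟨t, ⟨hθt, hzero⟩, fun t' ht' =>
    (strictAntiOn_pressure hγ0 hγ1 hsum hw hk).injOn ht'.1 hθt (ht'.2.trans hzero.symm)⟩

theorem AnalyticAt.exists_implicitFunction {𝕜 E : Type*} [RCLike 𝕜] [NormedAddCommGroup E]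
    [NormedSpace 𝕜 E] [CompleteSpace E] {f : E × 𝕜 → 𝕜} {u : E × 𝕜} {d : 𝕜}
    (hf : AnalyticAt 𝕜 f u) (hd : HasDerivAt (fun t => f (u.1, t)) d u.2) (hd0 : d ≠ 0) :
    ∃ ψ : E → 𝕜, AnalyticAt 𝕜 ψ u.1 ∧ ψ u.1 = u.2 ∧ ∀ᶠ x in 𝓝 u.1, f (x, ψ x) = f u := by
  have hcd : ContDiffAt 𝕜 ω f u := hf.contDiffAt
  have hpartial : fderiv 𝕜 f u ∘L ContinuousLinearMap.inr 𝕜 E 𝕜 =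
      ContinuousLinearEquiv.unitsEquivAut 𝕜 (Units.mk0 d hd0) := by
    have := hf.differentiableAt.hasFDerivAt.comp u.2 (hasFDerivAt_prodMk_right (𝕜 := 𝕜) u.1 u.2)
    ext
    simpa using (this.hasDerivAt.unique hd)
  have hinv : (fderiv 𝕜 f u ∘L ContinuousLinearMap.inr 𝕜 E 𝕜).IsInvertible :=
    ⟨_, hpartial.symm⟩
  exact ⟨hcd.implicitFunction (by simp) hinv, (hcd.contDiffAt_implicitFunction _ hinv).analyticAt,
    hcd.implicitFunction_apply_self _ hinv, hcd.eventually_apply_implicitFunction _ hinv⟩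

theorem analyticOnNhd_of_pressure_eq_zero {E : Type*} [NormedAddCommGroup E] [NormedSpace ℝ E]
    [CompleteSpace E] {w : E → ι → ℝ} {U : Set E} {Δ : E → ℝ} {k : ι} (hγ0 : ∀ i j, 0 < γ i j)
    (hγ1 : ∀ i j, γ i j < 1) (hsum : ∀ i t, θ < t → Summable fun j => γ i j ^ t)
    (hU : IsOpen U) (hw : ∀ x ∈ U, ∀ i, 0 ≤ w x i) (hk : ∀ x ∈ U, 0 < w x k)
    (hwa : ∀ x ∈ U, ∀ i, AnalyticAt ℝ (fun y => w y i) x)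
    (hΔ : ∀ x ∈ U, θ < Δ x ∧ pressure γ (w x) (Δ x) = 0) :
    AnalyticOnNhd ℝ Δ U := by
  intro x₀ hx₀
  obtain ⟨hθ, hzero⟩ := hΔ x₀ hx₀
  obtain ⟨d, hd, hderiv⟩ := exists_hasDerivAt_pressure_neg hγ0 hγ1 hsum (hw x₀ hx₀) (hk x₀ hx₀) hθ
  obtain ⟨ψ, hψ, hψx₀, hψroot⟩ := (analyticAt_pressure hγ0 (fun i j => (hγ1 i j).le) hsum
    (hwa x₀ hx₀) hθ).exists_implicitFunction (u := (x₀, Δ x₀)) hderiv hd.ne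
  refine hψ.congr ?_
  have hθψ : ∀ᶠ x in 𝓝 x₀, θ < ψ x := hψ.continuousAt.eventually (lt_mem_nhds (hψx₀ ▸ hθ))
  filter_upwards [hU.mem_nhds hx₀, hψroot, hθψ] with x hx hroot hθx
  exact (strictAntiOn_pressure hγ0 hγ1 hsum (hw x hx) (hk x hx)).injOn hθx (hΔ x hx).1
    (hroot.trans (hzero.trans (hΔ x hx).2.symm))

end Pressure

section Simplex

variable {n : ℕ}

/-- A stochastic vector `(p₀, …, pₙ₋₁, 1 - ∑ pᵢ)` is indexed by `Option (Fin n)`, `none` standing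
for the last coordinate `n`. -/
def optionIndex (n : ℕ) (o : Option (Fin n)) : ℕ := o.elim n Fin.val

noncomputable def simplexWeights (p : EuclideanSpace ℝ (Fin n)) (o : Option (Fin n)) : ℝ :=
  o.elim (1 - ∑ i, p i) p

theorem optionIndex_le (o : Option (Fin n)) : optionIndex n o ≤ n := by
  cases o with
  | none => exact le_rfl
  | some i => exact i.isLt.le

theorem exists_optionIndex_eq {i : ℕ} (hi : i ≤ n) : ∃ o, optionIndex n o = i := by
  rcases hi.lt_or_eq with hi | rfl
  · exact ⟨some ⟨i, hi⟩, rfl⟩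
  · exact ⟨none, rfl⟩

theorem pressure_simplexWeights (γ : ℕ → ℕ → ℝ) (p : EuclideanSpace ℝ (Fin n)) (t : ℝ) :
    pressure (fun o => γ (optionIndex n o)) (simplexWeights p) t =
      ∑ i : Fin n, p i * log (∑' j, γ i j ^ t) + (1 - ∑ i, p i) * log (∑' j, γ n j ^ t) := by
  simp [pressure, Fintype.sum_option, simplexWeights, optionIndex, add_comm]

theorem simplexWeights_pos {p : EuclideanSpace ℝ (Fin n)} (hp : (∀ i, 0 < p i) ∧ ∑ i, p i < 1)
    (o : Option (Fin n)) : 0 < simplexWeights p o := by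
  cases o with
  | none => exact sub_pos.2 hp.2
  | some i => exact hp.1 i

theorem analyticAt_simplexWeights (p : EuclideanSpace ℝ (Fin n)) (o : Option (Fin n)) :
    AnalyticAt ℝ (fun q => simplexWeights q o) p := by
  have hcoord (i : Fin n) : AnalyticAt ℝ (fun q : EuclideanSpace ℝ (Fin n) => q i) p :=
    (EuclideanSpace.proj (𝕜 := ℝ) i).analyticAt p
  cases o with
  | none => exact analyticAt_const.sub (Finset.analyticAt_fun_sum _ fun i _ => hcoord i)
  | some i => exact hcoord i

theorem isOpen_simplex :
    IsOpen {p : EuclideanSpace ℝ (Fin n) | (∀ i, 0 < p i) ∧ ∑ i, p i < 1} := by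
  simp only [Set.ofPred_and, Set.ofPred_forall]
  exact (isOpen_iInter_of_finite fun i => isOpen_lt continuous_const (by fun_prop)).inter
    (isOpen_lt (by fun_prop) continuous_const)

end Simplex

theorem dimension_real_analytic_general
    (m : ℕ) (γ : ℕ → ℕ → ℝ)
    (hγpos : ∀ i < m, ∀ j, 0 < γ i j)
    (hγsum : ∀ i < m, Summable (fun j => γ i j))
    (hγsup : ∃ C : ℝ, C < 1 ∧ ∀ i < m, ∀ j, γ i j ≤ C)
    (θ : ℝ)
    (hθ : θ = ⨆ i : Fin m, sInf {t : ℝ | 0 < t ∧ Summable (fun j => γ i j ^ t)})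
    (hdiv : ∃ i₀ < m, ¬ Summable (fun j => γ i₀ j ^ θ))
    (V' : Set (EuclideanSpace ℝ (Fin (m - 1))))
    (hV' : V' = {p | (∀ i, 0 < p i) ∧ ∑ i, p i < 1}) :
    (∀ p ∈ V', ∃! t : ℝ, θ < t ∧
      (∑ i : Fin (m - 1), p i * Real.log (∑' j, γ i j ^ t))
        + (1 - ∑ i, p i) * Real.log (∑' j, γ (m - 1) j ^ t) = 0) ∧
    ∃ Δ : EuclideanSpace ℝ (Fin (m - 1)) → ℝ,
      (∀ p ∈ V', θ < Δ p ∧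
        (∑ i : Fin (m - 1), p i * Real.log (∑' j, γ i j ^ (Δ p)))
          + (1 - ∑ i, p i) * Real.log (∑' j, γ (m - 1) j ^ (Δ p)) = 0) ∧
      AnalyticOnNhd ℝ Δ V' := by
  obtain ⟨C, hC1, hγC⟩ := hγsup
  obtain ⟨i₀, hi₀, hdiv⟩ := hdiv
  subst hV'
  set Γ : Option (Fin (m - 1)) → ℕ → ℝ := fun o => γ (optionIndex (m - 1) o)
  have hidx o : optionIndex (m - 1) o < m := by have := optionIndex_le o; omega
  have hΓ0 o j : 0 < Γ o j := hγpos _ (hidx o) j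
  have hΓ1 o j : Γ o j < 1 := (hγC _ (hidx o) j).trans_lt hC1
  have hΓsum o t (ht : θ < t) : Summable fun j => Γ o j ^ t := by
    refine summable_rpow_of_sInf_lt (hΓ0 o) (fun j => (hΓ1 o j).le) (hγsum _ (hidx o)) ?_
    refine lt_of_le_of_lt ?_ (hθ ▸ ht)
    exact le_ciSup (f := fun i : Fin m => sInf {t : ℝ | 0 < t ∧ Summable fun j => γ i j ^ t})
      (Set.finite_range _).bddAbove ⟨_, hidx o⟩
  obtain ⟨k, hk⟩ := exists_optionIndex_eq (n := m - 1) (i := i₀) (by omega)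
  have hroot (p : EuclideanSpace ℝ (Fin (m - 1))) (hp : (∀ i, 0 < p i) ∧ ∑ i, p i < 1) :
      ∃! t, θ < t ∧ pressure Γ (simplexWeights p) t = 0 :=
    existsUnique_pressure_eq_zero (k := k) hΓ0 hΓ1 (fun o => hγsum _ (hidx o)) hΓsum
      (by simpa [Γ, hk] using hdiv) (fun o => (simplexWeights_pos hp o).le)
      (simplexWeights_pos hp k)
  choose! Δ hΔ using fun p hp => (hroot p hp).exists
  simp only [← pressure_simplexWeights]
  refine ⟨hroot, Δ, hΔ, ?_⟩
  exact analyticOnNhd_of_pressure_eq_zero hΓ0 hΓ1 hΓsum isOpen_simplex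
    (fun p hp o => (simplexWeights_pos hp o).le) (fun p hp => simplexWeights_pos hp k)
    (fun p _ => analyticAt_simplexWeights p) hΔ

/-- For every `(η₁,…,η_{m-1}) ∈ V'` (with `η_m := 1 - η₁ - ⋯ - η_{m-1}`)
there is a unique `Δ(η) ∈ (θ, ∞)` with `∑_{i=1}^m ηᵢ · log (∑ⱼ γᵢⱼ^{Δ(η)}) = 0`, and the
function `Δ : V' → ℝ` is real analytic on `V'`. -/
theorem dimension_real_analytic
    (m : ℕ) (hm : 2 ≤ m) (γ : ℕ → ℕ → ℝ)
    (hγpos : ∀ i < m, ∀ j, 0 < γ i j)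
    (hγsum : ∀ i < m, Summable (fun j => γ i j))
    (hγsup : ∃ C : ℝ, C < 1 ∧ ∀ i < m, ∀ j, γ i j ≤ C)
    (θ : ℝ)
    (hθ : θ = ⨆ i : Fin m, sInf {t : ℝ | 0 < t ∧ Summable (fun j => γ i j ^ t)})
    (hdiv : ∃ i₀ < m, ¬ Summable (fun j => γ i₀ j ^ θ))
    (V' : Set (EuclideanSpace ℝ (Fin (m - 1))))
    (hV' : V' = {p | (∀ i, 0 < p i) ∧ ∑ i, p i < 1}) :
    (∀ p ∈ V', ∃! t : ℝ, θ < t ∧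
      (∑ i : Fin (m - 1), p i * Real.log (∑' j, γ i j ^ t))
        + (1 - ∑ i, p i) * Real.log (∑' j, γ (m - 1) j ^ t) = 0) ∧
    ∃ Δ : EuclideanSpace ℝ (Fin (m - 1)) → ℝ,
      (∀ p ∈ V', θ < Δ p ∧
        (∑ i : Fin (m - 1), p i * Real.log (∑' j, γ i j ^ (Δ p)))
          + (1 - ∑ i, p i) * Real.log (∑' j, γ (m - 1) j ^ (Δ p)) = 0) ∧
      AnalyticOnNhd ℝ Δ V' :=
  dimension_real_analytic_general m γ hγpos hγsum hγsup θ hθ hdiv V' hV'
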